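/- Let V be a torsion-free N-module that is generated in degrees ≤ n with respect to the sup norm. Then V admits a resolution ⋯ → P² → P¹ → P⁰ → V → 0 in which every term P^j is a (possibly infinite) direct sum of modules P(y) with y of sup norm ≤ n. (Equivalently, hd_s(V) ≤ gd(V) for all s ≥ 0.) -/

import Mathlib

open CategoryTheory CategoryTheory.Limits

/-- The poset `ℕ →₀ ℕ` of finitely supported sequences of naturals, with pointwise order,
regarded as a thin category. -/
abbrev NPoset := ℕ →₀ ℕ

/-- The sup norm of `x : ℕ →₀ ℕ` is `max_i x i`. -/
noncomputable def supNorm (x : NPoset) : ℕ := x.support.sup x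

/-- `P x` is the `k`-linearization of the representable functor `N(x, -)`. -/
noncomputable def Pmod (k : Type) [CommRing k] (x : NPoset) : NPoset ⥤ ModuleCat k :=
  coyoneda.obj (Opposite.op x) ⋙ ModuleCat.free k

/-- `Q` is a (possibly infinite) direct sum of modules `P y` with `y ∈ S`. -/
def IsDirectSumOfP (k : Type) [CommRing k] (Q : NPoset ⥤ ModuleCat k) (S : Set NPoset) : Prop :=
  ∃ (ι : Type) (g : ι → NPoset) (_ : ∀ j, g j ∈ S)
    (incl : ∀ j, Pmod k (g j) ⟶ Q), Nonempty (IsColimit (Cofan.mk Q incl))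

/-- `V` is generated in degrees `≤ n` with respect to a norm. -/
def GeneratedInDeg {k : Type} [CommRing k] (norm : NPoset → ℕ)
    (V : NPoset ⥤ ModuleCat k) (n : ℕ) : Prop :=
  ∀ z : NPoset,
    (⨆ (y : NPoset) (h : y ≤ z) (_ : norm y ≤ n),
      LinearMap.range (V.map (homOfLE h)).hom) = ⊤

/-- `V` admits a resolution `⋯ → P² → P¹ → P⁰ → V → 0` in which every term belongs to the
class of functors cut out by the predicate `good`. -/
def HasResolutionBy {k : Type} [CommRing k] (V : NPoset ⥤ ModuleCat k)
    (good : ℕ → (NPoset ⥤ ModuleCat k) → Prop) : Prop :=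
  ∃ (P : ℕ → (NPoset ⥤ ModuleCat k)) (d : ∀ j : ℕ, P (j + 1) ⟶ P j) (p : P 0 ⟶ V),
    (∀ j, good j (P j)) ∧
    (∀ z : NPoset, Function.Surjective (p.app z)) ∧
    (∀ z : NPoset, Function.Exact ((d 0).app z) (p.app z)) ∧
    (∀ (j : ℕ) (z : NPoset), Function.Exact ((d (j + 1)).app z) ((d j).app z))

/-!
Cover a module `W` generated in degrees `≤ n` by the free module on all pairs `(y, w)` with
`w ∈ W_y` and `‖y‖ ≤ n`. The kernel `K` of the cover is torsion free, being a submodule of a free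
module over a poset. If `W` is torsion free, `K` is again generated in degrees `≤ n`: for the sup
norm, the elements `y ≤ z` of norm `≤ n` have a greatest one `z'` (truncate `z` at `n`), so the
transition `z' → z` of the cover is onto, and injectivity of `W_{z' → z}` shows that any preimage
of an element of `K_z` lies in `K_{z'}`. Iterating gives the resolution.
-/

universe u v

def IsTorsionFree {k : Type*} [CommRing k] {C : Type*} [Category C] (V : C ⥤ ModuleCat k) :
    Prop :=
  ∀ ⦃x y : C⦄ (f : x ⟶ y), Function.Injective (V.map f)

section SigmaCoyoneda

variable {C : Type u} [Category.{v} C] {ι : Type v} (g : ι → C)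

def sigmaCoyoneda : C ⥤ Type v where
  obj z := Σ i, (g i ⟶ z)
  map h := TypeCat.ofHom fun p => ⟨p.1, p.2 ≫ h⟩

def sigmaCoyonedaInj (i : ι) : coyoneda.obj (Opposite.op (g i)) ⟶ sigmaCoyoneda g where
  app _ := TypeCat.ofHom fun f => ⟨i, f⟩

def isColimitSigmaCoyoneda : IsColimit (Cofan.mk (sigmaCoyoneda g) (sigmaCoyonedaInj g)) :=
  evaluationJointlyReflectsColimits _ fun _ =>
    (isColimitMapCoconeCofanMkEquiv _ _ _).symm <|
      Cofan.IsColimit.mk _ (fun s => TypeCat.ofHom fun p => s.inj p.1 p.2) (fun _ _ => rfl)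
        (fun _ _ hm => by ext ⟨i, f⟩; exact ConcreteCategory.congr_hom (hm i) f)

end SigmaCoyoneda

section FreeSigmaCoyoneda

variable (k : Type u) [CommRing k] {C : Type v} [Category.{u} C] {ι : Type u} (g : ι → C)

noncomputable abbrev freeSigmaCoyoneda : C ⥤ ModuleCat k :=
  sigmaCoyoneda g ⋙ ModuleCat.free k

noncomputable def isColimitFreeSigmaCoyoneda :
    IsColimit (Cofan.mk (freeSigmaCoyoneda k g)
      fun i => Functor.whiskerRight (sigmaCoyonedaInj g i) (ModuleCat.free k)) :=
  have := ((ModuleCat.adj k).whiskerRight C).leftAdjoint_preservesColimits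
  isColimitCofanMkObjOfIsColimit ((Functor.whiskeringRight C _ _).obj (ModuleCat.free k)) _ _
    (isColimitSigmaCoyoneda g)

variable {k g}

theorem freeSigmaCoyoneda_map_single {z z' : C} (h : z ⟶ z') (p : (sigmaCoyoneda g).obj z)
    (b : k) :
    (freeSigmaCoyoneda k g).map h (Finsupp.single p b) =
      Finsupp.single ((sigmaCoyoneda g).map h p) b :=
  Finsupp.mapDomain_single

variable {W : C ⥤ ModuleCat k} (w : ∀ i, W.obj (g i))

noncomputable def freeSigmaCoyonedaDesc : freeSigmaCoyoneda k g ⟶ W where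
  app z := ModuleCat.ofHom <|
    Finsupp.lift (W.obj z) k ((sigmaCoyoneda g).obj z) fun p => W.map p.2 (w p.1)
  naturality z z' h := by
    refine ModuleCat.hom_ext (Finsupp.lhom_ext' fun p => LinearMap.ext_ring ?_)
    change Finsupp.lift _ k _ _ ((freeSigmaCoyoneda k g).map h (Finsupp.single p 1)) =
      W.map h (Finsupp.lift _ k _ _ (Finsupp.single p 1))
    rw [freeSigmaCoyoneda_map_single]
    simp only [Finsupp.lift_apply, zero_smul, one_smul, Finsupp.sum_single_index]
    exact ConcreteCategory.congr_hom (W.map_comp p.2 h) (w p.1)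

theorem freeSigmaCoyonedaDesc_app_single {z : C} (p : (sigmaCoyoneda g).obj z) :
    (freeSigmaCoyonedaDesc w).app z (Finsupp.single p 1) = W.map p.2 (w p.1) := by
  change Finsupp.lift _ k _ _ (Finsupp.single p 1) = _
  simp only [Finsupp.lift_apply, zero_smul, one_smul, Finsupp.sum_single_index]

end FreeSigmaCoyoneda

section Preorder

variable {k : Type u} [CommRing k] {C : Type u} [Preorder C] {ι : Type u} {g : ι → C}

theorem isTorsionFree_freeSigmaCoyoneda : IsTorsionFree (freeSigmaCoyoneda k g) := fun _ _ _ =>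
  Finsupp.mapDomain_injective fun ⟨i, _⟩ ⟨_, _⟩ he => by
    obtain rfl : i = _ := congrArg Sigma.fst he
    exact congrArg _ (Subsingleton.elim _ _)

theorem freeSigmaCoyoneda_map_surjective {z z' : C} (h : z ⟶ z')
    (hg : ∀ i, g i ≤ z' → g i ≤ z) :
    Function.Surjective ((freeSigmaCoyoneda k g).map h) :=
  Finsupp.mapDomain_surjective fun ⟨i, f⟩ =>
    ⟨⟨i, homOfLE (hg i (leOfHom f))⟩, Sigma.ext rfl (Subsingleton.helim rfl _ _)⟩

end Preorder

section Kernel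

variable {k : Type*} [CommRing k] {C : Type*} [Category C] {F W : C ⥤ ModuleCat k} (φ : F ⟶ W)

noncomputable def kerFunctor : C ⥤ ModuleCat k where
  obj z := ModuleCat.of k (LinearMap.ker (φ.app z).hom)
  map {z z'} h := ModuleCat.ofHom <| (F.map h).hom.restrict fun x hx => by
    simp only [LinearMap.mem_ker] at hx ⊢
    rw [NatTrans.naturality_apply, hx, map_zero]
  map_id _ := by ext; simp
  map_comp _ _ := by ext; simp

noncomputable def kerFunctorι : kerFunctor φ ⟶ F where
  app z := ModuleCat.ofHom (LinearMap.ker (φ.app z).hom).subtype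

theorem kerFunctorι_app_injective (z : C) : Function.Injective ((kerFunctorι φ).app z) :=
  Subtype.val_injective

theorem IsTorsionFree.kerFunctor (hF : IsTorsionFree F) : IsTorsionFree (kerFunctor φ) :=
  fun _ _ f _ _ hab => Subtype.ext (hF f (congrArg Subtype.val hab))

theorem exact_kerFunctorι_comp {G : C ⥤ ModuleCat k} (σ : G ⟶ kerFunctor φ) (z : C)
    (hσ : Function.Surjective (σ.app z)) :
    Function.Exact ((σ ≫ kerFunctorι φ).app z) (φ.app z) :=
  (Function.Surjective.comp_exact_iff_exact (f := (kerFunctorι φ).app z |>.hom) hσ).2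
    (LinearMap.exact_subtype_ker_map _)

end Kernel

def HasTruncations (norm : NPoset → ℕ) (n : ℕ) : Prop :=
  ∀ z, ∃ z', IsGreatest {y | y ≤ z ∧ norm y ≤ n} z'

section Cover

variable {k : Type} [CommRing k] (norm : NPoset → ℕ) (n : ℕ) (W : NPoset ⥤ ModuleCat k)

abbrev Generator : Type := Σ y : {y : NPoset // norm y ≤ n}, W.obj y

noncomputable abbrev freeCover : NPoset ⥤ ModuleCat k :=
  freeSigmaCoyoneda k fun j : Generator norm n W => j.1.1

noncomputable abbrev freeCoverπ : freeCover norm n W ⟶ W :=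
  freeSigmaCoyonedaDesc fun j => j.2

theorem isDirectSumOfP_freeCover : IsDirectSumOfP k (freeCover norm n W) {y | norm y ≤ n} :=
  ⟨_, _, fun j => j.1.2, _, ⟨isColimitFreeSigmaCoyoneda k _⟩⟩

variable {norm n W}

theorem freeCoverπ_app_surjective (hW : GeneratedInDeg norm W n) (z : NPoset) :
    Function.Surjective ((freeCoverπ norm n W).app z) := by
  rw [← LinearMap.range_eq_top, eq_top_iff, ← hW z]
  refine iSup_le fun y => iSup_le fun hyz => iSup_le fun hy => ?_
  rintro _ ⟨w, rfl⟩
  exact ⟨Finsupp.single ⟨⟨⟨y, hy⟩, w⟩, homOfLE hyz⟩ 1, freeSigmaCoyonedaDesc_app_single _ _⟩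

theorem generatedInDeg_kerFunctor_freeCoverπ (hnorm : HasTruncations norm n)
    (hW : IsTorsionFree W) : GeneratedInDeg norm (kerFunctor (freeCoverπ norm n W)) n := by
  intro z
  rw [eq_top_iff]
  rintro ξ -
  obtain ⟨z', ⟨hz'z, hz'⟩, hz'_greatest⟩ := hnorm z
  obtain ⟨x, hx⟩ := freeSigmaCoyoneda_map_surjective (homOfLE hz'z)
    (fun j hj => hz'_greatest ⟨hj, j.1.2⟩) ξ.1
  have hx_ker : x ∈ LinearMap.ker ((freeCoverπ norm n W).app z').hom := by
    refine hW (homOfLE hz'z) ?_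
    rw [map_zero, ← NatTrans.naturality_apply, hx]
    exact ξ.2
  exact Submodule.mem_iSup_of_mem z' <| Submodule.mem_iSup_of_mem hz'z <|
    Submodule.mem_iSup_of_mem hz' ⟨⟨x, hx_ker⟩, Subtype.ext hx⟩

end Cover

section Syzygy

variable {k : Type} [CommRing k] {norm : NPoset → ℕ} {n : ℕ}

variable (norm n) in
noncomputable def syzygy (V : NPoset ⥤ ModuleCat k) : ℕ → (NPoset ⥤ ModuleCat k)
  | 0 => V
  | j + 1 => kerFunctor (freeCoverπ norm n (syzygy V j))

variable {V : NPoset ⥤ ModuleCat k}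

theorem isTorsionFree_syzygy (hV : IsTorsionFree V) :
    ∀ j, IsTorsionFree (syzygy norm n V j)
  | 0 => hV
  | _ + 1 => isTorsionFree_freeSigmaCoyoneda.kerFunctor _

theorem generatedInDeg_syzygy (hnorm : HasTruncations norm n) (htf : IsTorsionFree V)
    (hV : GeneratedInDeg norm V n) : ∀ j, GeneratedInDeg norm (syzygy norm n V j) n
  | 0 => hV
  | j + 1 => generatedInDeg_kerFunctor_freeCoverπ hnorm (isTorsionFree_syzygy htf j)

theorem hasResolutionBy_freeCover (hnorm : HasTruncations norm n) (htf : IsTorsionFree V)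
    (hV : GeneratedInDeg norm V n) :
    HasResolutionBy V (fun _ Q => IsDirectSumOfP k Q {y | norm y ≤ n}) := by
  have hπ (j : ℕ) (z : NPoset) :
      Function.Surjective ((freeCoverπ norm n (syzygy norm n V j)).app z) :=
    freeCoverπ_app_surjective (generatedInDeg_syzygy hnorm htf hV j) z
  have hexact (j : ℕ) (z : NPoset) :
      Function.Exact ((freeCoverπ norm n (syzygy norm n V (j + 1)) ≫ kerFunctorι _).app z)
        ((freeCoverπ norm n (syzygy norm n V j)).app z) :=
    exact_kerFunctorι_comp _ _ z (hπ (j + 1) z)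
  refine ⟨fun j => freeCover norm n (syzygy norm n V j),
    fun j => freeCoverπ norm n (syzygy norm n V (j + 1)) ≫ kerFunctorι _, freeCoverπ norm n V,
    fun _ => isDirectSumOfP_freeCover .., hπ 0, hexact 0, fun j z => ?_⟩
  exact (hexact (j + 1) z).comp_injective _ (kerFunctorι_app_injective _ z) (map_zero _)

end Syzygy

noncomputable def truncate (n : ℕ) (z : NPoset) : NPoset :=
  Finsupp.mapRange (min · n) (Nat.zero_min n) z

theorem apply_le_supNorm (y : NPoset) (i : ℕ) : y i ≤ supNorm y := by
  by_cases hi : y i = 0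
  · simp [hi]
  · exact Finset.le_sup (Finsupp.mem_support_iff.mpr hi)

theorem isGreatest_truncate (n : ℕ) (z : NPoset) :
    IsGreatest {y | y ≤ z ∧ supNorm y ≤ n} (truncate n z) := by
  refine ⟨⟨fun i => ?_, Finset.sup_le fun i _ => ?_⟩, fun y ⟨hyz, hy⟩ i => ?_⟩
  · simp [truncate]
  · simp [truncate]
  · simpa [truncate] using ⟨hyz i, (apply_le_supNorm y i).trans hy⟩

/-- A torsion-free `N`-module generated in degrees `≤ n` (sup norm) has a resolution all of whose
terms are direct sums of modules `P y` with `supNorm y ≤ n`. -/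
theorem stmt2 {k : Type} [CommRing k] (V : NPoset ⥤ ModuleCat k) (n : ℕ)
    (htf : ∀ (x y : NPoset) (h : x ≤ y), Function.Injective (V.map (homOfLE h)))
    (hV : GeneratedInDeg supNorm V n) :
    HasResolutionBy V (fun _ Q => IsDirectSumOfP k Q {y | supNorm y ≤ n}) :=
  hasResolutionBy_freeCover (fun z => ⟨_, isGreatest_truncate n z⟩)
    (fun x y f => htf x y (leOfHom f)) hV
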